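/- The composite (Id_{M(μ)} ⊗ cup) ∘ (F_μ ⊗ Id_{V₁}) ∘ F_{μ+1} : M(μ+2) → M(μ) is the zero map. Explicitly, for each basis vector v_i of M(μ+2), applying F_{μ+1}, then F_μ ⊗ Id, then Id ⊗ cup gives q^{i−μ−1}[i][μ+2−i] v_{i−1} − q^{i−μ−1}[i][μ+2−i] v_{i−1} = 0. -/
import Mathlib


open TensorProduct

noncomputable section

variable (F : Type) [Field F]

/-- Underlying space of a Verma module `M(μ)`: formal span of basis `v_i`, `i : ℕ`. -/
abbrev MM := ℕ →₀ F

/-- Underlying space of the 2-dimensional irreducible module `V₁`: basis `w₀, w₁`. -/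
abbrev V := Fin 2 →₀ F

/-- Basis vector `v_i` of a Verma module. -/
def vv (i : ℕ) : MM F := Finsupp.single i 1

/-- Basis vector `w_j` of `V₁`. -/
def ww (j : Fin 2) : V F := Finsupp.single j 1

/-- Linear map out of a Verma module defined on the basis. -/
def mkM {W : Type} [AddCommGroup W] [Module F W] (f : ℕ → W) : MM F →ₗ[F] W :=
  Finsupp.lift W F ℕ f

/-- Linear map out of `V₁` defined on the basis. -/
def mkV {W : Type} [AddCommGroup W] [Module F W] (f : Fin 2 → W) : V F →ₗ[F] W :=
  Finsupp.lift W F (Fin 2) f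

/-- Quantum bracket: if `x = q^k` then `qb q x = [k] = (q^k - q^(-k))/(q - q⁻¹)`. -/
def qb {G : Type} [Field G] (q x : G) : G := (x - x⁻¹) / (q - q⁻¹)

variable (q qm : F)

/- Actions on the Verma module `M(μ)`, where `qm` plays the role of `q^μ`. -/

/-- `K · v_i = q^(μ-2i) v_i`. -/
def KM : MM F →ₗ[F] MM F := mkM F fun i => (qm * (q⁻¹) ^ (2 * i)) • vv F i

/-- `K⁻¹ · v_i = q^(-μ+2i) v_i`. -/
def KMinv : MM F →ₗ[F] MM F := mkM F fun i => (qm⁻¹ * q ^ (2 * i)) • vv F i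

/-- `E · v_i = [i] v_(i-1)`. -/
def EM : MM F →ₗ[F] MM F := mkM F fun i => qb q (q ^ i) • vv F (i - 1)

/-- `F · v_i = [μ-i] v_(i+1)`. -/
def FM : MM F →ₗ[F] MM F := mkM F fun i => qb q (qm * (q⁻¹) ^ i) • vv F (i + 1)

/- Actions on `V₁`. -/

/-- `K · w_j = q^(1-2j) w_j`. -/
def KV : V F →ₗ[F] V F := mkV F fun j => (if j = 0 then q else q⁻¹) • ww F j

/-- `K⁻¹ · w_j = q^(2j-1) w_j`. -/
def KVinv : V F →ₗ[F] V F := mkV F fun j => (if j = 0 then q⁻¹ else q) • ww F j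

/-- `E · w₀ = 0`, `E · w₁ = w₀`. -/
def EV : V F →ₗ[F] V F := mkV F fun j => if j = 0 then 0 else ww F 0

/-- `F · w₀ = w₁`, `F · w₁ = 0`. -/
def FV : V F →ₗ[F] V F := mkV F fun j => if j = 0 then ww F 1 else 0

/- Coproduct actions on `M(μ) ⊗ V₁`:
`Δ(K) = K ⊗ K`, `Δ(E) = E ⊗ K + 1 ⊗ E`, `Δ(F) = F ⊗ 1 + K⁻¹ ⊗ F`. -/

def KT : MM F ⊗[F] V F →ₗ[F] MM F ⊗[F] V F := TensorProduct.map (KM F q qm) (KV F q)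

def KTinv : MM F ⊗[F] V F →ₗ[F] MM F ⊗[F] V F :=
  TensorProduct.map (KMinv F q qm) (KVinv F q)

def ET : MM F ⊗[F] V F →ₗ[F] MM F ⊗[F] V F :=
  TensorProduct.map (EM F q) (KV F q) + TensorProduct.map LinearMap.id (EV F)

def FT : MM F ⊗[F] V F →ₗ[F] MM F ⊗[F] V F :=
  TensorProduct.map (FM F q qm) LinearMap.id + TensorProduct.map (KMinv F q qm) (FV F)

/- Coproduct actions on `V₁ ⊗ V₁`. -/

def KVV : V F ⊗[F] V F →ₗ[F] V F ⊗[F] V F := TensorProduct.map (KV F q) (KV F q)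

def EVV : V F ⊗[F] V F →ₗ[F] V F ⊗[F] V F :=
  TensorProduct.map (EV F) (KV F q) + TensorProduct.map LinearMap.id (EV F)

def FVV : V F ⊗[F] V F →ₗ[F] V F ⊗[F] V F :=
  TensorProduct.map (FV F) LinearMap.id + TensorProduct.map (KVinv F q) (FV F)

/-- `E_μ : M(μ) ⊗ V₁ → M(μ+1)`, `E_μ(v_i ⊗ w₀) = q^i v_i`, `E_μ(v_i ⊗ w₁) = v_(i+1)`. -/
def Emap : MM F ⊗[F] V F →ₗ[F] MM F :=
  TensorProduct.lift (mkM F fun i => mkV F fun j =>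
    if j = 0 then q ^ i • vv F i else vv F (i + 1))

/-- `F_μ : M(μ+1) → M(μ) ⊗ V₁`,
`F_μ(v_i) = [μ+1-i] v_i ⊗ w₀ + q^(i-μ-1) [i] v_(i-1) ⊗ w₁`. -/
def Fmap : MM F →ₗ[F] MM F ⊗[F] V F :=
  mkM F fun i =>
    qb q (qm * q * (q⁻¹) ^ i) • (vv F i ⊗ₜ[F] ww F 0) +
    (q ^ i * qm⁻¹ * q⁻¹ * qb q (q ^ i)) • (vv F (i - 1) ⊗ₜ[F] ww F 1)

/-- Evaluation (denoted `cup` in the paper): `ev(w₀⊗w₁) = -q`, `ev(w₁⊗w₀) = 1`,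
`ev(w₀⊗w₀) = ev(w₁⊗w₁) = 0`. -/
def ev : V F ⊗[F] V F →ₗ[F] F :=
  TensorProduct.lift (mkV F fun j => mkV F fun j' =>
    if j = 0 ∧ j' = 1 then -q else if j = 1 ∧ j' = 0 then 1 else 0)

/-- Coevaluation (denoted `cap` in the paper): `1 ↦ w₀⊗w₁ - q⁻¹ w₁⊗w₀`. -/
def coev : F →ₗ[F] V F ⊗[F] V F :=
  LinearMap.toSpanSingleton F _ (ww F 0 ⊗ₜ[F] ww F 1 - q⁻¹ • (ww F 1 ⊗ₜ[F] ww F 0))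

/-- `Id_X ⊗ ev : (X ⊗ V₁) ⊗ V₁ → X`. -/
def ev2 (X : Type) [AddCommGroup X] [Module F X] : (X ⊗[F] V F) ⊗[F] V F →ₗ[F] X :=
  (TensorProduct.rid F X).toLinearMap ∘ₗ LinearMap.lTensor X (ev F q) ∘ₗ
    (TensorProduct.assoc F X (V F) (V F)).toLinearMap

/-- `Id_X ⊗ coev : X → (X ⊗ V₁) ⊗ V₁`. -/
def coev2 (X : Type) [AddCommGroup X] [Module F X] : X →ₗ[F] (X ⊗[F] V F) ⊗[F] V F :=
  (TensorProduct.assoc F X (V F) (V F)).symm.toLinearMap ∘ₗ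
    LinearMap.lTensor X (coev F q) ∘ₗ (TensorProduct.rid F X).symm.toLinearMap

/-- `A F n` is (the underlying space of) `M(μ) ⊗ V₁^{⊗ n}`, left associated. -/
def A : ℕ → ModuleCat F
  | 0 => ModuleCat.of F (MM F)
  | n + 1 => ModuleCat.of F ((A n) ⊗[F] V F)

/-- Extend `f : M(μ') ⊗ V₁ → M(μ'+1)`-type maps by identities on the right:
`ext f k = f ⊗ Id^{⊗ k} : M ⊗ V₁^{⊗(k+1)} → M' ⊗ V₁^{⊗ k}`. -/
def ext (f : A F 1 →ₗ[F] A F 0) : ∀ k, A F (k + 1) →ₗ[F] A F k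
  | 0 => f
  | k + 1 => LinearMap.rTensor (V F) (ext f k)

/-- Extend `g : M(μ'+1) → M(μ') ⊗ V₁`-type maps by identities on the right. -/
def ext' (g : A F 0 →ₗ[F] A F 1) : ∀ k, A F k →ₗ[F] A F (k + 1)
  | 0 => g
  | k + 1 => LinearMap.rTensor (V F) (ext' g k)

/-- Extend a map `A (a+2) → A a` (e.g. `Id ⊗ ev` at the last two positions of `A (a+2)`)
by `k` identities on the right. -/
def cext {a : ℕ} (f : A F (a + 2) →ₗ[F] A F a) : ∀ k, A F (a + 2 + k) →ₗ[F] A F (a + k)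
  | 0 => f
  | k + 1 => LinearMap.rTensor (V F) (cext f k)

/-- Extend a map `A a → A (a+2)` (e.g. `Id ⊗ coev`) by `k` identities on the right. -/
def cext' {a : ℕ} (g : A F a →ₗ[F] A F (a + 2)) : ∀ k, A F (a + k) →ₗ[F] A F (a + 2 + k)
  | 0 => g
  | k + 1 => LinearMap.rTensor (V F) (cext' g k)

/-- The composite `E_{μ+n-1} ∘ E_{μ+n-2,1} ∘ ⋯ ∘ E_{μ,n-1} : M(μ) ⊗ V₁^{⊗n} → M(μ+n)`. -/
def Echain (q : F) : F → ∀ n, A F n →ₗ[F] A F 0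
  | _, 0 => LinearMap.id
  | qm, n + 1 => (Echain q (q * qm) n).comp (ext F (Emap F q) n)

/-- The composite `F_{μ,n-1} ∘ F_{μ+1,n-2} ∘ ⋯ ∘ F_{μ+n-1} : M(μ+n) → M(μ) ⊗ V₁^{⊗n}`. -/
def Fchain (q : F) : F → ∀ n, A F 0 →ₗ[F] A F n
  | _, 0 => LinearMap.id
  | qm, n + 1 => (ext' F (Fmap F q qm) n).comp (Fchain q (q * qm) n)

/-- The scalar `[μ+n][μ+n-1]⋯[μ+1]`. -/
def cf {G : Type} [Field G] (q : G) : G → ℕ → G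
  | _, 0 => 1
  | qm, n + 1 => qb q (q * qm) * cf q (q * qm) n

/-- The extended Jones–Wenzl projector
`P_{μ,n} = F_{μ,n-1}⋯F_{μ+n-1} E_{μ+n-1}⋯E_{μ,n-1} / ([μ+n]⋯[μ+1])`. -/
def P (n : ℕ) : A F n →ₗ[F] A F n :=
  (cf q qm n)⁻¹ • ((Fchain F q qm n).comp (Echain F q qm n))


lemma mkM_single {W : Type} [AddCommGroup W] [Module F W] (f : ℕ → W) (i : ℕ) :
    mkM F f (vv F i) = f i := by
  simp [mkM, vv]

lemma mkV_single {W : Type} [AddCommGroup W] [Module F W] (f : Fin 2 → W) (j : Fin 2) :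
    mkV F f (ww F j) = f j := by
  simp [mkV, ww]

lemma ev_ww (j j' : Fin 2) :
    ev F q (ww F j ⊗ₜ[F] ww F j') =
      if j = 0 ∧ j' = 1 then -q else if j = 1 ∧ j' = 0 then 1 else 0 := by
  simp [ev, mkM_single, mkV_single]

lemma ev2_tmul {X : Type} [AddCommGroup X] [Module F X] (x : X) (w w' : V F) :
    ev2 F q X ((x ⊗ₜ[F] w) ⊗ₜ[F] w') = ev F q (w ⊗ₜ[F] w') • x := by
  simp [ev2, TensorProduct.rid_tmul]

lemma Fmap_vv (i : ℕ) :
    Fmap F q qm (vv F i) =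
      qb q (qm * q * (q⁻¹) ^ i) • (vv F i ⊗ₜ[F] ww F 0) +
        (q ^ i * qm⁻¹ * q⁻¹ * qb q (q ^ i)) • (vv F (i - 1) ⊗ₜ[F] ww F 1) := by
  simp [Fmap, mkM_single]

lemma qb_one : qb q (1 : F) = 0 := by simp [qb]

/-- `(Id ⊗ ev) ∘ (F_μ ⊗ Id) ∘ F_{μ+1} = 0` as a map `M(μ+2) → M(μ)`. -/
theorem stmt10 (hq : q ≠ 0) (hqm : qm ≠ 0) :
    (ev2 F q (MM F)).comp
      ((LinearMap.rTensor (V F) (Fmap F q qm)).comp (Fmap F q (q * qm))) = 0 := by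
  apply Finsupp.lhom_ext
  intro i b
  have hb : (Finsupp.single i b : MM F) = b • vv F i := by
    simp [vv, Finsupp.smul_single]
  rw [hb]
  simp only [LinearMap.comp_apply, LinearMap.map_smul, LinearMap.zero_apply, smul_zero]
  rw [Fmap_vv]
  simp only [LinearMap.map_add, LinearMap.map_smul, LinearMap.rTensor_tmul,
    LinearMap.id_apply, Fmap_vv]
  simp only [TensorProduct.add_tmul, TensorProduct.smul_tmul', LinearMap.map_add,
    LinearMap.map_smul, ev2_tmul, ev_ww]
  norm_num
  rcases i with _ | n
  · simp [qb_one]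
  · simp only [Nat.add_sub_cancel]
    simp only [smul_smul, ← neg_smul, ← add_smul]
    convert zero_smul F _
    have hA : qb q (q * qm * q * (q ^ (n + 1))⁻¹) = qb q (qm * q * (q ^ n)⁻¹) := by
      congr 1
      field_simp
      ring
    rw [hA]
    set s := qb q (qm * q * (q ^ n)⁻¹)
    set t := qb q (q ^ (n + 1))
    field_simp
    ring

end
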